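/- (Real-parameter lemma behind Theorem 4.2.) Let a, b, c, λ₁, β be real numbers with a ≥ b > 0, c > 0, λ₁ > 0 and β > 0. Then there exists Λ₂ > 0 such that for every λ₂ > Λ₂ and every t > 0 satisfying a + ((λ₁ − λ₂)/(2λ₂)) b − 2 λ₂ t² c − ½ t (1 + 3β) a = 0, one has t² ( a + ((λ₁ − λ₂)/λ₂) b ) + ½ t⁴ λ₂ c − ½ a < 0. -/
import Mathlib


/-- the real-parameter lemma behind Theorem 4.2. If `a ≥ b > 0`, `c > 0`,
`λ₁ > 0` and `β > 0`, then for `λ₂` large enough, any `t > 0` satisfying the Nehari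
equation `a + ((λ₁−λ₂)/(2λ₂))b − 2λ₂t²c − ½t(1+3β)a = 0` also satisfies the energy
inequality `t²(a + ((λ₁−λ₂)/λ₂)b) + ½t⁴λ₂c − ½a < 0`. -/
theorem real_parameter_lemma (a b c l1 β : ℝ)
    (hab : b ≤ a) (hb : 0 < b) (hc : 0 < c) (hl1 : 0 < l1) (hβ : 0 < β) :
    ∃ L2 : ℝ, 0 < L2 ∧ ∀ l2 : ℝ, L2 < l2 → ∀ t : ℝ, 0 < t →
      a + (l1 - l2) / (2 * l2) * b - 2 * l2 * t ^ 2 * c - 1 / 2 * t * (1 + 3 * β) * a = 0 →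
      t ^ 2 * (a + (l1 - l2) / l2 * b) + 1 / 2 * t ^ 4 * l2 * c - 1 / 2 * a < 0 := by
  have ha : 0 < a := lt_of_lt_of_le hb hab
  refine ⟨l1 + 5 * a / (4 * c), by positivity, ?_⟩
  intro l2 hl2 t ht hN
  have h1 : l1 < l2 := lt_of_le_of_lt (le_add_of_nonneg_right (by positivity)) hl2
  have h2 : 5 * a / (4 * c) < l2 := lt_of_le_of_lt (le_add_of_nonneg_left hl1.le) hl2
  have hl2pos : 0 < l2 := hl1.trans h1
  have hl2ne : l2 ≠ 0 := hl2pos.ne'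
  have h2' : 5 * a < 4 * c * l2 := by
    rw [div_lt_iff₀ (by positivity)] at h2; linarith
  -- clear denominators in hN
  have hN' : 2 * l2 * a + (l1 - l2) * b - 4 * l2 ^ 2 * t ^ 2 * c - l2 * t * (1 + 3 * β) * a = 0 := by
    have := hN
    field_simp at this
    nlinarith [this]
  -- key bound
  have H : 2 * l2 * t ^ 2 * c ≤ a := by
    nlinarith [mul_pos (mul_pos hl2pos ht) ha, mul_pos (sub_pos.mpr h1) hb,
      mul_pos (mul_pos hl2pos ht) (mul_pos hβ ha)]
  -- goal times l2
  have hx : l2 * (t ^ 2 * (a + (l1 - l2) / l2 * b) + 1 / 2 * t ^ 4 * l2 * c - 1 / 2 * a) < 0 := by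
    have hrw : l2 * (t ^ 2 * (a + (l1 - l2) / l2 * b) + 1 / 2 * t ^ 4 * l2 * c - 1 / 2 * a)
        = t ^ 2 * (l2 * a + (l1 - l2) * b) + 1 / 2 * t ^ 4 * l2 ^ 2 * c - 1 / 2 * l2 * a := by
      field_simp
    rw [hrw]
    nlinarith [mul_pos (sub_pos.mpr h1) (mul_pos (pow_pos ht 2) hb),
      mul_le_mul H H (by positivity) ha.le,
      mul_le_mul_of_nonneg_left H ha.le, sq_nonneg t, h2',
      mul_pos (pow_pos ht 2) (mul_pos hl2pos hc)]
  by_contra hcon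
  push_neg at hcon
  nlinarith [mul_nonneg hl2pos.le hcon]
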